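/- arXiv:1902.04399 — 7 statements merged into one kernel-verified Lean document; each statement's English description precedes it below -/
import Mathlib

section
/- For all nonzero functions g, h in L^p of a measure space with p > 2, one has ‖g+h‖_p ≤ (1 - (‖g‖_p ‖h‖_p / (‖g‖_p + ‖h‖_p)^2) ‖ |g|^{p/2}/‖g‖_p^{p/2} - |h|^{p/2}/‖h‖_p^{p/2} ‖_2^2 )^{1/p} (‖g‖_p + ‖h‖_p). -/
/-!
Put `t = G / (G + H)`, `s = H / (G + H)`, `u = |g|^(p/2) / G^(p/2)` and `v = |h|^(p/2) / H^(p/2)`,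
so that `u` and `v` are unit vectors of `L²`. Pointwise `|g + h| / (G + H) ≤ t |g| / G + s |h| / H`,
and convexity of `x ↦ x^(p/2)` for `p ≥ 2` gives `|g + h|^p ≤ (G + H)^p (t u + s v)²`. Since
`t + s = 1`, `(t u + s v)² = t u² + s v² - t s (u - v)²`, so integrating yields
`‖g + h‖_p^p ≤ (G + H)^p (1 - t s ‖u - v‖₂²)` with `t s = G H / (G + H)²`.
-/

open MeasureTheory

theorem convex_comb_sq_eq {t s : ℝ} (hts : t + s = 1) (a b : ℝ) :
    (t * a + s * b) ^ 2 = t * a ^ 2 + s * b ^ 2 - t * s * (a - b) ^ 2 := by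
  obtain rfl : s = 1 - t := by linarith
  ring

theorem rpow_convex_comb_le_sq {p : ℝ} (hp : 2 ≤ p) {x y t s : ℝ} (hx : 0 ≤ x) (hy : 0 ≤ y)
    (ht : 0 ≤ t) (hs : 0 ≤ s) (hts : t + s = 1) :
    (t * x + s * y) ^ p ≤ (t * x ^ (p / 2) + s * y ^ (p / 2)) ^ 2 := by
  have hconv := (convexOn_rpow (by linarith : (1 : ℝ) ≤ p / 2)).2
    (Set.mem_Ici.2 hx) (Set.mem_Ici.2 hy) ht hs hts
  simp only [smul_eq_mul] at hconv
  calc (t * x + s * y) ^ p = ((t * x + s * y) ^ (p / 2)) ^ 2 := by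
        rw [← Real.rpow_mul_natCast (by positivity)]; norm_num
    _ ≤ _ := pow_le_pow_left₀ (by positivity) hconv 2

theorem rpow_add_le_mul_convex_comb_sq {p : ℝ} (hp : 2 ≤ p) {a b G H : ℝ} (ha : 0 ≤ a)
    (hb : 0 ≤ b) (hG : 0 < G) (hH : 0 < H) :
    (a + b) ^ p ≤ (G + H) ^ p *
      (G / (G + H) * (a ^ (p / 2) / G ^ (p / 2)) + H / (G + H) * (b ^ (p / 2) / H ^ (p / 2))) ^ 2 := by
  have hGH : 0 < G + H := by positivity
  have hsplit : (a + b) / (G + H) = G / (G + H) * (a / G) + H / (G + H) * (b / H) := by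
    field_simp
  have key := rpow_convex_comb_le_sq hp (div_nonneg ha hG.le) (div_nonneg hb hH.le)
    (div_nonneg hG.le hGH.le) (div_nonneg hH.le hGH.le) (by field_simp)
  rw [← hsplit, Real.div_rpow ha hG.le, Real.div_rpow hb hH.le] at key
  calc (a + b) ^ p = (G + H) ^ p * ((a + b) / (G + H)) ^ p := by
        rw [Real.div_rpow (by positivity) hGH.le]; field_simp
    _ ≤ _ := by gcongr

section

variable {α : Type*} [MeasurableSpace α] {μ : Measure α}

theorem integral_convex_comb_sq {u v : α → ℝ} (hu : MemLp u 2 μ) (hv : MemLp v 2 μ) {t s : ℝ}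
    (hts : t + s = 1) :
    ∫ x, (t * u x + s * v x) ^ 2 ∂μ
      = t * ∫ x, u x ^ 2 ∂μ + s * ∫ x, v x ^ 2 ∂μ - t * s * ∫ x, (u x - v x) ^ 2 ∂μ := by
  have hu2 : Integrable (fun x => t * u x ^ 2) μ := hu.integrable_sq.const_mul t
  have hv2 : Integrable (fun x => s * v x ^ 2) μ := hv.integrable_sq.const_mul s
  have huv2 : Integrable (fun x => t * s * (u x - v x) ^ 2) μ :=
    (hu.sub hv).integrable_sq.const_mul _
  simp_rw [convex_comb_sq_eq hts]
  rw [integral_sub (hu2.fun_add hv2) huv2, integral_add hu2 hv2, integral_const_mul,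
    integral_const_mul, integral_const_mul]

variable {E : Type*} [NormedAddCommGroup E]

theorem memLp_two_norm_rpow_half {f : α → E} {p : ℝ} (hf : Integrable (fun x => ‖f x‖ ^ p) μ) :
    MemLp (fun x => ‖f x‖ ^ (p / 2)) 2 μ := by
  have hsqrt (x : α) : ‖f x‖ ^ (p / 2) = (‖f x‖ ^ p) ^ (1 / 2 : ℝ) := by
    rw [← Real.rpow_mul (norm_nonneg _)]; ring_nf
  have hmeas : AEStronglyMeasurable (fun x => ‖f x‖ ^ (p / 2)) μ := by
    simp_rw [hsqrt]
    exact (hf.aemeasurable.pow_const _).aestronglyMeasurable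
  refine (memLp_two_iff_integrable_sq hmeas).2 (hf.congr (Filter.Eventually.of_forall fun x => ?_))
  simp only
  rw [← Real.rpow_mul_natCast (norm_nonneg _)]; norm_num

theorem integral_sq_norm_rpow_half_div_eq_one {f : α → E} {p : ℝ} (hp : p ≠ 0)
    (hf : 0 < ∫ x, ‖f x‖ ^ p ∂μ) :
    ∫ x, (‖f x‖ ^ (p / 2) / ((∫ x, ‖f x‖ ^ p ∂μ) ^ (1 / p)) ^ (p / 2)) ^ 2 ∂μ = 1 := by
  have hpow (y : ℝ) (hy : 0 ≤ y) : (y ^ (p / 2)) ^ 2 = y ^ p := by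
    rw [← Real.rpow_mul_natCast hy]; norm_num
  have hnorm : ((∫ x, ‖f x‖ ^ p ∂μ) ^ (1 / p)) ^ p = ∫ x, ‖f x‖ ^ p ∂μ := by
    rw [← Real.rpow_mul hf.le, one_div_mul_cancel hp, Real.rpow_one]
  simp_rw [div_pow, hpow _ (norm_nonneg _), hpow _ (Real.rpow_nonneg hf.le _), hnorm]
  rw [integral_div, div_self hf.ne']

end

theorem rpow_one_div_le_of_le_rpow_mul {p K X c : ℝ} (hp : 0 < p) (hK : 0 ≤ K) (hc : 0 < c)
    (h : K ≤ c ^ p * X) : K ^ (1 / p) ≤ X ^ (1 / p) * c := by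
  have hX : 0 ≤ X := nonneg_of_mul_nonneg_right (hK.trans h) (by positivity)
  calc K ^ (1 / p) ≤ (c ^ p * X) ^ (1 / p) := by gcongr
    _ = X ^ (1 / p) * c := by
      rw [Real.mul_rpow (by positivity) hX, ← Real.rpow_mul hc.le, mul_one_div_cancel hp.ne',
        Real.rpow_one, mul_comm]

theorem improved_triangle_inequality_general
    {α : Type*} [MeasurableSpace α] (μ : Measure α) (p : ℝ) (hp : 2 < p)
    (g h : α → ℂ)
    (hgI : Integrable (fun x => ‖g x‖ ^ p) μ)
    (hhI : Integrable (fun x => ‖h x‖ ^ p) μ)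
    (hgne : 0 < ∫ x, ‖g x‖ ^ p ∂μ) (hhne : 0 < ∫ x, ‖h x‖ ^ p ∂μ)
    (G H : ℝ)
    (hG : G = (∫ x, ‖g x‖ ^ p ∂μ) ^ (1 / p))
    (hH : H = (∫ x, ‖h x‖ ^ p ∂μ) ^ (1 / p)) :
    (∫ x, ‖g x + h x‖ ^ p ∂μ) ^ (1 / p)
      ≤ (1 - (G * H / (G + H) ^ 2) *
          ∫ x, (‖g x‖ ^ (p / 2) / G ^ (p / 2) - ‖h x‖ ^ (p / 2) / H ^ (p / 2)) ^ 2 ∂μ)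
            ^ (1 / p) * (G + H) := by
  have hp0 : 0 < p := by linarith
  have hG0 : 0 < G := hG ▸ Real.rpow_pos_of_pos hgne _
  have hH0 : 0 < H := hH ▸ Real.rpow_pos_of_pos hhne _
  set u := fun x => ‖g x‖ ^ (p / 2) / G ^ (p / 2)
  set v := fun x => ‖h x‖ ^ (p / 2) / H ^ (p / 2)
  have hu : MemLp u 2 μ := by
    simpa only [u, div_eq_mul_inv] using (memLp_two_norm_rpow_half hgI).mul_const _
  have hv : MemLp v 2 μ := by
    simpa only [v, div_eq_mul_inv] using (memLp_two_norm_rpow_half hhI).mul_const _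
  have hu1 : ∫ x, u x ^ 2 ∂μ = 1 := by
    simp only [u, hG]; exact integral_sq_norm_rpow_half_div_eq_one hp0.ne' hgne
  have hv1 : ∫ x, v x ^ 2 ∂μ = 1 := by
    simp only [v, hH]; exact integral_sq_norm_rpow_half_div_eq_one hp0.ne' hhne
  have hts : G / (G + H) + H / (G + H) = 1 := by field_simp
  have hpointwise (x : α) :
      ‖g x + h x‖ ^ p ≤ (G + H) ^ p * (G / (G + H) * u x + H / (G + H) * v x) ^ 2 :=
    (Real.rpow_le_rpow (norm_nonneg _) (norm_add_le _ _) hp0.le).trans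
      (rpow_add_le_mul_convex_comb_sq hp.le (norm_nonneg _) (norm_nonneg _) hG0 hH0)
  have hintegral : ∫ x, ‖g x + h x‖ ^ p ∂μ
      ≤ (G + H) ^ p * (1 - G * H / (G + H) ^ 2 * ∫ x, (u x - v x) ^ 2 ∂μ) := by
    calc ∫ x, ‖g x + h x‖ ^ p ∂μ
        ≤ ∫ x, (G + H) ^ p * (G / (G + H) * u x + H / (G + H) * v x) ^ 2 ∂μ :=
          integral_mono_of_nonneg (.of_forall fun _ => by positivity)
            (((hu.const_mul _).add (hv.const_mul _)).integrable_sq.const_mul _)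
            (.of_forall hpointwise)
      _ = _ := by
          rw [integral_const_mul, integral_convex_comb_sq hu hv hts, hu1, hv1]
          field_simp
  exact rpow_one_div_le_of_le_rpow_mul hp0 (integral_nonneg fun _ => by positivity)
    (by positivity) hintegral

theorem improved_triangle_inequality
    {α : Type*} [MeasurableSpace α] (μ : Measure α) (p : ℝ) (hp : 2 < p)
    (g h : α → ℂ)
    (hg : AEStronglyMeasurable g μ) (hh : AEStronglyMeasurable h μ)
    (hgI : Integrable (fun x => ‖g x‖ ^ p) μ)
    (hhI : Integrable (fun x => ‖h x‖ ^ p) μ)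
    (hgne : 0 < ∫ x, ‖g x‖ ^ p ∂μ) (hhne : 0 < ∫ x, ‖h x‖ ^ p ∂μ)
    (G H : ℝ)
    (hG : G = (∫ x, ‖g x‖ ^ p ∂μ) ^ (1 / p))
    (hH : H = (∫ x, ‖h x‖ ^ p ∂μ) ^ (1 / p)) :
    (∫ x, ‖g x + h x‖ ^ p ∂μ) ^ (1 / p)
      ≤ (1 - (G * H / (G + H) ^ 2) *
          ∫ x, (‖g x‖ ^ (p / 2) / G ^ (p / 2) - ‖h x‖ ^ (p / 2) / H ^ (p / 2)) ^ 2 ∂μ)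
            ^ (1 / p) * (G + H) :=
  improved_triangle_inequality_general μ p hp g h hgI hhI hgne hhne G H hG hH
end

section
/- Let λ ∈ [0,1], p > 2, and let u, v be nonnegative functions on a measure space with ‖u‖_p = ‖v‖_p = 1. Then ‖λu + (1-λ)v‖_p^p ≤ 1 - λ(1-λ) ‖u^{p/2} - v^{p/2}‖_2^2. -/
/-! With `A = a ^ (p / 2)`, `B = b ^ (p / 2)` and `c = l a + (1 - l) b`, convexity of
`t ↦ t ^ (p / 2)` (as `p / 2 ≥ 1`) gives `c ^ (p / 2) ≤ l A + (1 - l) B`, and squaring,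
`c ^ p ≤ (l A + (1 - l) B) ^ 2 = l A ^ 2 + (1 - l) B ^ 2 - l (1 - l) (A - B) ^ 2`.
Integrating this pointwise bound and using `∫ u ^ p = ∫ v ^ p = 1` gives the theorem. -/

open MeasureTheory

namespace Real

lemma rpow_div_two_sq {a : ℝ} (ha : 0 ≤ a) (p : ℝ) : (a ^ (p / 2)) ^ 2 = a ^ p := by
  rw [← rpow_mul_natCast ha]
  norm_num

lemma rpow_convex_combination_le {p l a b : ℝ} (hp : 2 ≤ p) (hl0 : 0 ≤ l) (hl1 : l ≤ 1)
    (ha : 0 ≤ a) (hb : 0 ≤ b) :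
    (l * a + (1 - l) * b) ^ p
      ≤ l * a ^ p + (1 - l) * b ^ p - l * (1 - l) * (a ^ (p / 2) - b ^ (p / 2)) ^ 2 := by
  have hc : 0 ≤ l * a + (1 - l) * b := by
    have : 0 ≤ 1 - l := by linarith
    positivity
  have hconv : (l * a + (1 - l) * b) ^ (p / 2) ≤ l * a ^ (p / 2) + (1 - l) * b ^ (p / 2) := by
    simpa only [smul_eq_mul] using
      (convexOn_rpow (by linarith : 1 ≤ p / 2)).2 ha hb hl0 (by linarith) (by ring)
  have hsq := pow_le_pow_left₀ (rpow_nonneg hc _) hconv 2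
  rw [← rpow_div_two_sq hc, ← rpow_div_two_sq ha, ← rpow_div_two_sq hb]
  nlinarith [hsq]

end Real

section

variable {α : Type*} [MeasurableSpace α] {μ : Measure α} {p : ℝ} {u v : α → ℝ}

lemma aestronglyMeasurable_rpow_div_two (hun : ∀ x, 0 ≤ u x)
    (hu : Integrable (fun x => u x ^ p) μ) :
    AEStronglyMeasurable (fun x => u x ^ (p / 2)) μ := by
  have hsqrt := Continuous.comp_aestronglyMeasurable
    (Real.continuous_rpow_const (by norm_num : (0 : ℝ) ≤ 1 / 2)) hu.aestronglyMeasurable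
  refine hsqrt.congr (Filter.Eventually.of_forall fun x => ?_)
  simp only [← Real.rpow_mul (hun x)]
  ring_nf

lemma integrable_sq_rpow_div_two_sub (hun : ∀ x, 0 ≤ u x) (hvn : ∀ x, 0 ≤ v x)
    (hu : Integrable (fun x => u x ^ p) μ) (hv : Integrable (fun x => v x ^ p) μ) :
    Integrable (fun x => (u x ^ (p / 2) - v x ^ (p / 2)) ^ 2) μ := by
  refine ((hu.add hv).const_mul 2).mono'
    (((aestronglyMeasurable_rpow_div_two hun hu).sub
      (aestronglyMeasurable_rpow_div_two hvn hv)).pow 2)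
    (Filter.Eventually.of_forall fun x => ?_)
  rw [Real.norm_of_nonneg (sq_nonneg _), Pi.add_apply, ← Real.rpow_div_two_sq (hun x) p,
    ← Real.rpow_div_two_sq (hvn x) p]
  nlinarith [sq_nonneg (u x ^ (p / 2) + v x ^ (p / 2))]

lemma integral_rpow_convex_combination_le (hp : 2 ≤ p) {l : ℝ} (hl0 : 0 ≤ l) (hl1 : l ≤ 1)
    (hun : ∀ x, 0 ≤ u x) (hvn : ∀ x, 0 ≤ v x)
    (hu : Integrable (fun x => u x ^ p) μ) (hv : Integrable (fun x => v x ^ p) μ) :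
    ∫ x, (l * u x + (1 - l) * v x) ^ p ∂μ
      ≤ l * ∫ x, u x ^ p ∂μ + (1 - l) * ∫ x, v x ^ p ∂μ
        - l * (1 - l) * ∫ x, (u x ^ (p / 2) - v x ^ (p / 2)) ^ 2 ∂μ := by
  have hg := integrable_sq_rpow_div_two_sub hun hvn hu hv
  have hmix : Integrable (fun x => l * u x ^ p + (1 - l) * v x ^ p) μ :=
    (hu.const_mul l).add (hv.const_mul (1 - l))
  have hc : ∀ x, 0 ≤ l * u x + (1 - l) * v x := fun x => by
    have := hun x; have := hvn x; have : 0 ≤ 1 - l := by linarith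
    positivity
  calc ∫ x, (l * u x + (1 - l) * v x) ^ p ∂μ
      ≤ ∫ x, (l * u x ^ p + (1 - l) * v x ^ p
          - l * (1 - l) * (u x ^ (p / 2) - v x ^ (p / 2)) ^ 2) ∂μ :=
        integral_mono_of_nonneg (Filter.Eventually.of_forall fun x => Real.rpow_nonneg (hc x) p)
          (hmix.sub (hg.const_mul _)) (Filter.Eventually.of_forall fun x =>
            Real.rpow_convex_combination_le hp hl0 hl1 (hun x) (hvn x))
    _ = _ := by
      rw [integral_sub hmix (hg.const_mul _), integral_add (hu.const_mul l) (hv.const_mul (1 - l)),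
        integral_const_mul, integral_const_mul, integral_const_mul]

end

theorem convex_combination_lp_bound_general
    {α : Type*} [MeasurableSpace α] (μ : Measure α) (p : ℝ) (hp : 2 < p)
    (l : ℝ) (hl0 : 0 ≤ l) (hl1 : l ≤ 1)
    (u v : α → ℝ)
    (hun : ∀ x, 0 ≤ u x) (hvn : ∀ x, 0 ≤ v x)
    (hup : ∫ x, u x ^ p ∂μ = 1) (hvp : ∫ x, v x ^ p ∂μ = 1) :
    ∫ x, (l * u x + (1 - l) * v x) ^ p ∂μ
      ≤ 1 - l * (1 - l) * ∫ x, (u x ^ (p / 2) - v x ^ (p / 2)) ^ 2 ∂μ := by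
  have hu := Integrable.of_integral_ne_zero (hup ▸ one_ne_zero)
  have hv := Integrable.of_integral_ne_zero (hvp ▸ one_ne_zero)
  have h := integral_rpow_convex_combination_le hp.le hl0 hl1 hun hvn hu hv
  rwa [hup, hvp, mul_one, mul_one, add_sub_cancel] at h

theorem convex_combination_lp_bound
    {α : Type*} [MeasurableSpace α] (μ : Measure α) (p : ℝ) (hp : 2 < p)
    (l : ℝ) (hl0 : 0 ≤ l) (hl1 : l ≤ 1)
    (u v : α → ℝ) (hu : Measurable u) (hv : Measurable v)
    (hun : ∀ x, 0 ≤ u x) (hvn : ∀ x, 0 ≤ v x)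
    (hup : ∫ x, u x ^ p ∂μ = 1) (hvp : ∫ x, v x ^ p ∂μ = 1) :
    ∫ x, (l * u x + (1 - l) * v x) ^ p ∂μ
      ≤ 1 - l * (1 - l) * ∫ x, (u x ^ (p / 2) - v x ^ (p / 2)) ^ 2 ∂μ :=
  convex_combination_lp_bound_general μ p hp l hl0 hl1 u v hun hvn hup hvp
end

section
/- Let p > 2, N ≥ 2, and let f_1, ..., f_N be nonnegative measurable functions on a probability space with ∑_{j=1}^N f_j = 1 almost everywhere. Then ∑_{j=1}^N ∫ f_j^2 ≤ (∑_{j=1}^N ∫ f_j^p)^{1/(p-1)}. -/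
/-!
Pointwise, the weighted power-mean inequality with the weights `f j x` (which sum to `1`) at
the points `f j x` gives `(∑ j, f j x ^ 2) ^ (p - 1) ≤ ∑ j, f j x ^ p`. Integrating, and applying
Jensen's inequality on the probability space to the concave map `t ↦ t ^ (1 / (p - 1))`, gives
the claim.
-/

open MeasureTheory Finset

theorem sum_sq_le_rpow_sum_rpow {ι : Type*} (s : Finset ι) {w : ι → ℝ}
    (hw : ∀ i ∈ s, 0 ≤ w i) (hw1 : ∑ i ∈ s, w i = 1) {p : ℝ} (hp : 2 ≤ p) :
    ∑ i ∈ s, w i ^ 2 ≤ (∑ i ∈ s, w i ^ p) ^ (1 / (p - 1)) := by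
  have power_mean :=
    Real.rpow_arith_mean_le_arith_mean_rpow s w w hw hw1 hw (by linarith : 1 ≤ p - 1)
  have hpow : ∀ i ∈ s, w i * w i ^ (p - 1) = w i ^ p := fun i hi => by
    rw [← Real.rpow_one_add' (hw i hi) (by linarith), add_sub_cancel]
  simp only [← sq, sum_congr rfl hpow] at power_mean
  rw [one_div, Real.le_rpow_inv_iff_of_pos (sum_nonneg fun i _ => sq_nonneg _)
    (sum_nonneg fun i hi => Real.rpow_nonneg (hw i hi) p) (by linarith)]
  exact power_mean

section Integral

variable {α : Type*} [MeasurableSpace α] {μ : Measure α} {g : α → ℝ} {θ : ℝ}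

theorem integrable_rpow_of_ae_le_one [IsFiniteMeasure μ] (hg : AEStronglyMeasurable g μ)
    (hg0 : ∀ᵐ x ∂μ, 0 ≤ g x) (hg1 : ∀ᵐ x ∂μ, g x ≤ 1) (hθ : 0 ≤ θ) :
    Integrable (fun x => g x ^ θ) μ := by
  refine .of_bound (hg.aemeasurable.pow_const θ).aestronglyMeasurable 1 ?_
  filter_upwards [hg0, hg1] with x hx0 hx1
  rw [Real.norm_of_nonneg (Real.rpow_nonneg hx0 θ)]
  exact Real.rpow_le_one hx0 hx1 hθ

theorem MeasureTheory.Integrable.rpow_of_le_one [IsFiniteMeasure μ] (hg : Integrable g μ)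
    (hg0 : 0 ≤ᵐ[μ] g) (hθ0 : 0 ≤ θ) (hθ1 : θ ≤ 1) : Integrable (fun x => g x ^ θ) μ := by
  refine ((integrable_const 1).add hg).mono'
    (hg.aemeasurable.pow_const θ).aestronglyMeasurable ?_
  filter_upwards [hg0] with x (hx : 0 ≤ g x)
  rw [Real.norm_of_nonneg (Real.rpow_nonneg hx θ), Pi.add_apply]
  rcases le_total (g x) 1 with h | h
  · linarith [Real.rpow_le_one hx h hθ0]
  · have := Real.rpow_le_rpow_of_exponent_le h hθ1
    rw [Real.rpow_one] at this
    linarith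

theorem integral_rpow_le_rpow_integral [IsProbabilityMeasure μ] (hg : Integrable g μ)
    (hg0 : 0 ≤ᵐ[μ] g) (hθ0 : 0 ≤ θ) (hθ1 : θ ≤ 1) :
    ∫ x, g x ^ θ ∂μ ≤ (∫ x, g x ∂μ) ^ θ :=
  (Real.concaveOn_rpow hθ0 hθ1).le_map_integral (Real.continuous_rpow_const hθ0).continuousOn
    isClosed_Ici hg0 hg (hg.rpow_of_le_one hg0 hθ0 hθ1)

end Integral

theorem sum_sq_le_sum_pow_general
    {α : Type*} [MeasurableSpace α] (μ : Measure α) [IsProbabilityMeasure μ]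
    (p : ℝ) (hp : 2 < p) (N : ℕ)
    (f : Fin N → α → ℝ) (hm : ∀ j, Measurable (f j))
    (hnn : ∀ j x, 0 ≤ f j x)
    (hsum : ∀ᵐ x ∂μ, ∑ j, f j x = 1) :
    ∑ j, ∫ x, f j x ^ 2 ∂μ ≤ (∑ j, ∫ x, f j x ^ p ∂μ) ^ (1 / (p - 1)) := by
  have hle : ∀ j, ∀ᵐ x ∂μ, f j x ≤ 1 := fun j => by
    filter_upwards [hsum] with x hx
    exact hx ▸ single_le_sum (fun i _ => hnn i x) (mem_univ j)
  have hint : ∀ j {q : ℝ}, 0 ≤ q → Integrable (fun x => f j x ^ q) μ := fun j _ hq =>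
    integrable_rpow_of_ae_le_one (hm j).aestronglyMeasurable (.of_forall (hnn j)) (hle j) hq
  have hint_sq : ∀ j, Integrable (fun x => f j x ^ 2) μ := fun j => by
    simpa only [Real.rpow_two] using hint j zero_le_two
  have hint_sum : Integrable (fun x => ∑ j, f j x ^ p) μ :=
    integrable_finsetSum _ fun j _ => hint j (by linarith)
  have hsum_nonneg : 0 ≤ᵐ[μ] fun x => ∑ j, f j x ^ p :=
    .of_forall fun x => sum_nonneg fun j _ => Real.rpow_nonneg (hnn j x) p
  have hθ0 : 0 ≤ 1 / (p - 1) := div_nonneg zero_le_one (by linarith)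
  have hθ1 : 1 / (p - 1) ≤ 1 := (div_le_one (by linarith)).2 (by linarith)
  calc ∑ j, ∫ x, f j x ^ 2 ∂μ = ∫ x, ∑ j, f j x ^ 2 ∂μ :=
        (integral_finsetSum _ fun j _ => hint_sq j).symm
    _ ≤ ∫ x, (∑ j, f j x ^ p) ^ (1 / (p - 1)) ∂μ := by
      refine integral_mono_ae (integrable_finsetSum _ fun j _ => hint_sq j)
        (hint_sum.rpow_of_le_one hsum_nonneg hθ0 hθ1) ?_
      filter_upwards [hsum] with x hx
      exact sum_sq_le_rpow_sum_rpow univ (fun j _ => hnn j x) hx hp.le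
    _ ≤ (∫ x, ∑ j, f j x ^ p ∂μ) ^ (1 / (p - 1)) :=
      integral_rpow_le_rpow_integral hint_sum hsum_nonneg hθ0 hθ1
    _ = (∑ j, ∫ x, f j x ^ p ∂μ) ^ (1 / (p - 1)) := by
      rw [integral_finsetSum _ fun j _ => hint j (by linarith)]

theorem sum_sq_le_sum_pow
    {α : Type*} [MeasurableSpace α] (μ : Measure α) [IsProbabilityMeasure μ]
    (p : ℝ) (hp : 2 < p) (N : ℕ) (hN : 2 ≤ N)
    (f : Fin N → α → ℝ) (hm : ∀ j, Measurable (f j))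
    (hnn : ∀ j x, 0 ≤ f j x)
    (hsum : ∀ᵐ x ∂μ, ∑ j, f j x = 1) :
    ∑ j, ∫ x, f j x ^ 2 ∂μ ≤ (∑ j, ∫ x, f j x ^ p ∂μ) ^ (1 / (p - 1)) :=
  sum_sq_le_sum_pow_general μ p hp N f hm hnn hsum
end

section
/- For every integer N ≥ 2, every real p > 2, and every x ∈ [0, (N-1)/N), with r = r(N,p) = 2N/(2N + (p-2)(2N-1)), one has N ≤ (1 + (N-1) ((1 - Nx/(N-1))^{p/2} / (1+Nx)^{p-1})^r) (1 + Nx). -/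
/-!
Write `M = N - 1`, `t = N x ∈ [0, M)`, `A = 1 - t / M` and `B = 1 + t`. Since `M A + B = N`,
the claim is that the `r`-th power in it is at least `A / B`. With `b = (p - 2) / D`,
`D = 2N + (p - 2)(2N - 1)`, the exponents satisfy `r p / 2 = 1 - M b` and `r (p - 1) = 1 + b`,
so that power equals `(A / B) / (A ^ M * B) ^ b`, and `A ^ M * B ≤ 1` is AM-GM for the
`M + 1` numbers `A, …, A, B` of mean `1`.
-/

open Real

/-- Bernoulli's inequality for `u = t / (M - t)`, which satisfies `(1 - t / M) * (1 + u) = 1`. -/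
lemma one_sub_div_pow_mul_one_add_le_one {M : ℕ} {t : ℝ} (ht : 0 ≤ t) (htM : t < M) :
    (1 - t / M) ^ M * (1 + t) ≤ 1 := by
  have hMt : 0 < (M : ℝ) - t := by linarith
  have hM : (0 : ℝ) < M := by linarith
  set u := t / ((M : ℝ) - t) with hu_def
  have hu : 0 ≤ u := by positivity
  have ht_le : 1 + t ≤ (1 + u) ^ M := calc
    1 + t ≤ 1 + M * u := by
      rw [add_le_add_iff_left, mul_div_assoc', le_div_iff₀ hMt]; nlinarith
    _ ≤ (1 + u) ^ M := one_add_mul_le_pow (by linarith) M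
  have hA : 0 ≤ 1 - t / M := by rw [sub_nonneg, div_le_one hM]; exact htM.le
  have hinv : (1 - t / M) * (1 + u) = 1 := by rw [hu_def]; field_simp; ring
  calc (1 - t / M) ^ M * (1 + t) ≤ (1 - t / M) ^ M * (1 + u) ^ M := by gcongr
    _ = 1 := by rw [← mul_pow, hinv, one_pow]

lemma div_le_rpow_sub_div_rpow_add {A B b : ℝ} {M : ℕ} (hA : 0 < A) (hB : 0 < B) (hb : 0 ≤ b)
    (hAB : A ^ M * B ≤ 1) : A / B ≤ A ^ (1 - M * b) / B ^ (1 + b) := by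
  have hpow : A ^ (1 - M * b) / B ^ (1 + b) = A / B / (A ^ M * B) ^ b := by
    rw [mul_rpow (by positivity) hB.le, ← rpow_natCast, ← rpow_mul hA.le, rpow_sub hA,
      rpow_add hB, rpow_one, rpow_one]
    field_simp
  rw [hpow]
  exact le_div_self (by positivity) (by positivity) (rpow_le_one (by positivity) hAB hb)

theorem one_variable_inequality_p_gt_two (N : ℕ) (hN : 2 ≤ N) (p : ℝ) (hp : 2 < p)
    (x : ℝ) (hx0 : 0 ≤ x) (hx1 : x < ((N : ℝ) - 1) / N)
    (r : ℝ) (hr : r = 2 * (N : ℝ) / (2 * (N : ℝ) + (p - 2) * (2 * (N : ℝ) - 1))) :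
    (N : ℝ) ≤ (1 + ((N : ℝ) - 1) *
        ((1 - (N : ℝ) * x / ((N : ℝ) - 1)) ^ (p / 2) / (1 + (N : ℝ) * x) ^ (p - 1)) ^ r) *
      (1 + (N : ℝ) * x) := by
  obtain ⟨M, rfl⟩ : ∃ M, N = M + 1 := ⟨N - 1, by omega⟩
  have hM : (1 : ℝ) ≤ M := by exact_mod_cast (by omega : 1 ≤ M)
  push_cast at hx1 hr ⊢
  simp only [add_sub_cancel_right] at hx1 hr ⊢
  set t := ((M : ℝ) + 1) * x
  have ht0 : 0 ≤ t := by positivity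
  have htM : t < M := by rw [lt_div_iff₀ (by positivity)] at hx1; linarith
  have hA : 0 < 1 - t / M := by rw [sub_pos, div_lt_one (by positivity)]; exact htM
  have hD : 0 < 2 * ((M : ℝ) + 1) + (p - 2) * (2 * (M + 1) - 1) := by nlinarith
  set b := (p - 2) / (2 * ((M : ℝ) + 1) + (p - 2) * (2 * (M + 1) - 1)) with hb
  have hexpA : p / 2 * r = 1 - M * b := by rw [hr, hb]; field_simp; ring
  have hexpB : (p - 1) * r = 1 + b := by rw [hr, hb]; field_simp; ring
  have hkey : (1 - t / M) / (1 + t) ≤ ((1 - t / M) ^ (p / 2) / (1 + t) ^ (p - 1)) ^ r := by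
    rw [div_rpow (by positivity) (by positivity), ← rpow_mul hA.le, ← rpow_mul (by positivity),
      hexpA, hexpB]
    exact div_le_rpow_sub_div_rpow_add hA (by positivity) (div_nonneg (by linarith) hD.le)
      (one_sub_div_pow_mul_one_add_le_one ht0 htM)
  calc (M : ℝ) + 1 = (1 + M * ((1 - t / M) / (1 + t))) * (1 + t) := by field_simp; ring
    _ ≤ _ := by gcongr
end

section
/- For every integer N ≥ 2, every real p ∈ (1,2), and every x ∈ [0, (N-1)/N), with r = r(N,p) = 2N/(2N + (p-2)(2N-1)), one has N ≥ (1 + (N-1) ((1 - Nx/(N-1))^{p/2} / (1+Nx)^{p-1})^r) (1 + Nx). -/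
/-! Put `t = N x`, `u = 1 - t / (N - 1)` and `v = 1 + t`. Since `(N - 1) u + v = N`, the claim is
`(u ^ (p / 2) / v ^ (p - 1)) ^ r ≤ u / v`. The value of `r` is exactly the one for which
`p r / 2 = 1 + (N - 1) a` and `(p - 1) r = 1 - a` with `a = (2 - p) / (2N + (p - 2)(2N - 1)) ≥ 0`,
so the left side equals `(u / v) (u ^ (N - 1) v) ^ a`, and `u ^ (N - 1) v ≤ 1` is a Bernoulli-type
(AM-GM) inequality. -/

open Real

theorem one_sub_pow_mul_one_add_mul_le_one (m : ℕ) {s : ℝ} (hs₀ : -1 ≤ s) (hs₁ : s ≤ 1) :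
    (1 - s) ^ m * (1 + m * s) ≤ 1 :=
  calc (1 - s) ^ m * (1 + m * s) ≤ (1 - s) ^ m * (1 + s) ^ m :=
        mul_le_mul_of_nonneg_left (one_add_mul_le_pow (by linarith) m)
          (pow_nonneg (by linarith) m)
    _ = (1 - s ^ 2) ^ m := by rw [← mul_pow]; ring
    _ ≤ 1 := pow_le_one₀ (by nlinarith) (by nlinarith)

theorem one_sub_div_rpow_mul_one_add_le_one {N : ℕ} (hN : 2 ≤ N) {t : ℝ}
    (ht₀ : -((N : ℝ) - 1) ≤ t) (ht₁ : t ≤ N - 1) :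
    (1 - t / (N - 1)) ^ ((N : ℝ) - 1) * (1 + t) ≤ 1 := by
  have hN₁ : (0 : ℝ) < N - 1 := by
    have : (2 : ℝ) ≤ N := by exact_mod_cast hN
    linarith
  have hcast : ((N - 1 : ℕ) : ℝ) = N - 1 := by push_cast [Nat.cast_sub (by omega : 1 ≤ N)]; ring
  have h := one_sub_pow_mul_one_add_mul_le_one (N - 1) (s := t / (N - 1))
    (by rw [le_div_iff₀ hN₁]; linarith) (by rw [div_le_one hN₁]; exact ht₁)
  rwa [hcast, mul_div_cancel₀ _ hN₁.ne', ← rpow_natCast, hcast] at h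

theorem rpow_one_add_mul_div_rpow_one_sub_le {u v m a : ℝ} (hu : 0 < u) (hv : 0 < v) (ha : 0 ≤ a)
    (h : u ^ m * v ≤ 1) : u ^ (1 + m * a) / v ^ (1 - a) ≤ u / v :=
  calc u ^ (1 + m * a) / v ^ (1 - a) = u / v * (u ^ m * v) ^ a := by
        rw [sub_eq_add_neg, rpow_add hu, rpow_add hv, rpow_neg hv.le, rpow_mul hu.le,
          mul_rpow (by positivity) hv.le, rpow_one, rpow_one]
        field_simp
    _ ≤ u / v := mul_le_of_le_one_right (by positivity) (rpow_le_one (by positivity) h ha)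

theorem one_variable_inequality_p_lt_two (N : ℕ) (hN : 2 ≤ N) (p : ℝ) (hp1 : 1 < p) (hp2 : p < 2)
    (x : ℝ) (hx0 : 0 ≤ x) (hx1 : x < ((N : ℝ) - 1) / N)
    (r : ℝ) (hr : r = 2 * (N : ℝ) / (2 * (N : ℝ) + (p - 2) * (2 * (N : ℝ) - 1))) :
    (N : ℝ) ≥ (1 + ((N : ℝ) - 1) *
        ((1 - (N : ℝ) * x / ((N : ℝ) - 1)) ^ (p / 2) / (1 + (N : ℝ) * x) ^ (p - 1)) ^ r) *
      (1 + (N : ℝ) * x) := by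
  have hn : (2 : ℝ) ≤ N := by exact_mod_cast hN
  have ht₀ : 0 ≤ (N : ℝ) * x := by positivity
  have ht₁ : (N : ℝ) * x < N - 1 := by rwa [lt_div_iff₀ (by positivity), mul_comm] at hx1
  set t := (N : ℝ) * x
  set u := 1 - t / ((N : ℝ) - 1)
  have hu : 0 < u := by
    have : t / ((N : ℝ) - 1) < 1 := (div_lt_one (by linarith)).mpr ht₁
    linarith
  have hv : 0 < 1 + t := by linarith
  have hN₁ : (N : ℝ) - 1 ≠ 0 := by linarith
  have hD : 0 < 2 * (N : ℝ) + (p - 2) * (2 * N - 1) := by nlinarith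
  set a := (2 - p) / (2 * (N : ℝ) + (p - 2) * (2 * N - 1))
  have hu_exp : p / 2 * r = 1 + (N - 1) * a := by simp only [hr, a]; field_simp; ring
  have hv_exp : (p - 1) * r = 1 - a := by simp only [hr, a]; field_simp; ring
  have key : (u ^ (p / 2) / (1 + t) ^ (p - 1)) ^ r ≤ u / (1 + t) := by
    rw [div_rpow (by positivity) (by positivity), ← rpow_mul hu.le, ← rpow_mul hv.le,
      hu_exp, hv_exp]
    exact rpow_one_add_mul_div_rpow_one_sub_le hu hv (div_nonneg (by linarith) hD.le)
      (one_sub_div_rpow_mul_one_add_le_one hN (by linarith) ht₁.le)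
  have hsum : (N - 1) * u = N - (1 + t) := by
    simp only [u]; field_simp; ring
  rw [le_div_iff₀ hv] at key
  nlinarith
end

section
/- Fix an integer N ≥ 2 and a real p > 2, and suppose r > 0 is such that for all B ∈ [N^{1-p}, 1], 1 ≤ (1 + (N-1)(N ((1/(N(N-1)))(1 - B^{1/(p-1)}))^{p/2} / B)^r)^{p-1} B. Then r ≤ 2N/(2N + (p-2)(2N-1)). -/
/-! Write `f(B)` for the right-hand side of the hypothesis. At the left endpoint `b = N^{1-p}`
we have `b^{1/(p-1)} = 1/N`, so the inner ratio equals `1` and `f(b) = N^{p-1} b = 1`. The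
hypothesis therefore says that `f` attains its minimum over `[b, 1]` at `b`, forcing
`f'(b) ≥ 0`; differentiating gives `f'(b) = N^{p-2} (N - r (p/2 + (p-1)(N-1)))`, and
`2 (p/2 + (p-1)(N-1)) = 2N + (p-2)(2N-1)`. -/

open Real Set

theorem HasDerivAt.nonneg_of_isMinOn_Icc {f : ℝ → ℝ} {f' a c : ℝ} (hf : HasDerivAt f f' a)
    (hac : a < c) (hmin : IsMinOn f (Icc a c) a) : 0 ≤ f' := by
  have hcone : c - a ∈ posTangentConeAt (Icc a c) a :=
    sub_mem_posTangentConeAt_of_segment_subset (segment_eq_Icc hac.le).subset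
  have := hmin.localize.hasFDerivWithinAt_nonneg hf.hasDerivWithinAt hcone
  simp only [ContinuousLinearMap.toSpanSingleton_apply, smul_eq_mul] at this
  exact nonneg_of_mul_nonneg_right this (sub_pos.2 hac)

namespace Sharpness

noncomputable def weight (n p B : ℝ) : ℝ :=
  1 / (n * (n - 1)) * (1 - B ^ (1 / (p - 1)))

noncomputable def ratio (n p B : ℝ) : ℝ :=
  n * weight n p B ^ (p / 2) / B

noncomputable def profile (n p r B : ℝ) : ℝ :=
  (1 + (n - 1) * ratio n p B ^ r) ^ (p - 1) * B

variable {n p : ℝ}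

theorem weight_base (hn : 1 < n) (hp : p ≠ 1) : weight n p (n ^ (1 - p)) = n ^ (-2 : ℝ) := by
  have hn0 : 0 < n := by linarith
  rw [weight, ← rpow_mul hn0.le,
    show (1 - p) * (1 / (p - 1)) = -1 by field_simp [sub_ne_zero.2 hp]; ring,
    rpow_neg_one, rpow_neg hn0.le, rpow_two]
  field_simp [(sub_pos.2 hn).ne']

theorem ratio_base (hn : 1 < n) (hp : p ≠ 1) : ratio n p (n ^ (1 - p)) = 1 := by
  have hn0 : 0 < n := by linarith
  rw [ratio, weight_base hn hp, ← rpow_mul hn0.le, rpow_sub hn0, show -2 * (p / 2) = -p by ring,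
    rpow_neg hn0.le, rpow_one]
  field_simp

theorem hasDerivAt_ratio_base (hn : 1 < n) (hp : 1 < p) :
    HasDerivAt (ratio n p) (-(1 + p / (2 * (p - 1) * (n - 1))) / n ^ (1 - p)) (n ^ (1 - p)) := by
  have hn0 : 0 < n := by linarith
  set b := n ^ (1 - p) with hb
  have hb0 : 0 < b := rpow_pos_of_pos hn0 _
  have hwb : weight n p b = n ^ (-2 : ℝ) := weight_base hn hp.ne'
  have d1 : HasDerivAt (fun B : ℝ => B ^ (1 / (p - 1))) (1 / (p - 1) * b ^ (1 / (p - 1) - 1)) b :=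
    hasDerivAt_rpow_const (Or.inl hb0.ne')
  have d2 := ((d1.const_sub 1).const_mul (1 / (n * (n - 1)))).rpow_const (p := p / 2)
    (Or.inl (show weight n p b ≠ 0 by rw [hwb]; positivity))
  refine ((d2.const_mul n).div (hasDerivAt_id' b) hb0.ne').congr_deriv ?_
  have hp1 : p - 1 ≠ 0 := (sub_pos.2 hp).ne'
  rw [← weight, hwb, hb, ← rpow_mul hn0.le, ← rpow_mul hn0.le, ← rpow_mul hn0.le,
    show (1 - p) * (1 / (p - 1) - 1) = p - 2 by field_simp; ring,
    show -2 * (p / 2 - 1) = 2 - p by ring, show -2 * (p / 2) = -p by ring,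
    rpow_sub hn0, rpow_sub hn0, rpow_sub hn0, rpow_neg hn0.le, rpow_one, rpow_two]
  field_simp
  ring

theorem profile_base (hn : 1 < n) (hp : p ≠ 1) (r : ℝ) : profile n p r (n ^ (1 - p)) = 1 := by
  have hn0 : 0 < n := by linarith
  rw [profile, ratio_base hn hp, one_rpow, mul_one, add_sub_cancel, ← rpow_add hn0]
  simp

theorem hasDerivAt_profile_base (hn : 1 < n) (hp : 1 < p) (r : ℝ) :
    HasDerivAt (profile n p r) (n ^ (p - 2) * (n - r * (p / 2 + (p - 1) * (n - 1))))
      (n ^ (1 - p)) := by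
  have hn0 : 0 < n := by linarith
  have hR := ratio_base hn hp.ne'
  have d1 := (((hasDerivAt_ratio_base hn hp).rpow_const (p := r)
    (Or.inl (show ratio n p (n ^ (1 - p)) ≠ 0 by rw [hR]; norm_num))).const_mul (n - 1)).const_add 1
  have d2 := (d1.rpow_const (p := p - 1) (Or.inl (by rw [hR, one_rpow, mul_one, add_sub_cancel]; exact hn0.ne'))).mul
    (hasDerivAt_id' _)
  refine d2.congr_deriv ?_
  have hpow : n ^ (p - 1) = n ^ (p - 2) * n := by rw [← rpow_add_one hn0.ne']; ring_nf
  have hb0 : n ^ (1 - p) ≠ 0 := (rpow_pos_of_pos hn0 _).ne'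
  simp only [hR, one_rpow, mul_one, add_sub_cancel]
  rw [show p - 1 - 1 = p - 2 by ring, hpow]
  field_simp [(sub_pos.2 hp).ne', (sub_pos.2 hn).ne']
  ring

end Sharpness

theorem sharpness_of_r_general (N : ℕ) (hN : 2 ≤ N) (p : ℝ) (hp : 2 < p) (r : ℝ)
    (h : ∀ B : ℝ, B ∈ Set.Icc ((N : ℝ) ^ (1 - p)) 1 →
      1 ≤ (1 + ((N : ℝ) - 1) *
          ((N : ℝ) * ((1 / ((N : ℝ) * ((N : ℝ) - 1))) * (1 - B ^ (1 / (p - 1)))) ^ (p / 2)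
            / B) ^ r) ^ (p - 1) * B) :
    r ≤ 2 * (N : ℝ) / (2 * (N : ℝ) + (p - 2) * (2 * (N : ℝ) - 1)) := by
  have hN1 : (1 : ℝ) < N := by exact_mod_cast hN
  have hp1 : 1 < p := by linarith
  have hmin : IsMinOn (Sharpness.profile N p r) (Icc ((N : ℝ) ^ (1 - p)) 1) ((N : ℝ) ^ (1 - p)) :=
    isMinOn_iff.2 fun B hB => (Sharpness.profile_base hN1 hp1.ne' r).symm ▸ h B hB
  have hslope := (Sharpness.hasDerivAt_profile_base hN1 hp1 r).nonneg_of_isMinOn_Icc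
    (rpow_lt_one_of_one_lt_of_neg hN1 (by linarith)) hmin
  have hbound : r * (p / 2 + (p - 1) * (N - 1)) ≤ N := by
    linarith [(mul_nonneg_iff_of_pos_left (rpow_pos_of_pos (by linarith) (p - 2))).1 hslope]
  rw [le_div_iff₀ (by nlinarith)]
  linarith

theorem sharpness_of_r (N : ℕ) (hN : 2 ≤ N) (p : ℝ) (hp : 2 < p) (r : ℝ) (hr : 0 < r)
    (h : ∀ B : ℝ, B ∈ Set.Icc ((N : ℝ) ^ (1 - p)) 1 →
      1 ≤ (1 + ((N : ℝ) - 1) *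
          ((N : ℝ) * ((1 / ((N : ℝ) * ((N : ℝ) - 1))) * (1 - B ^ (1 / (p - 1)))) ^ (p / 2)
            / B) ^ r) ^ (p - 1) * B) :
    r ≤ 2 * (N : ℝ) / (2 * (N : ℝ) + (p - 2) * (2 * (N : ℝ) - 1)) :=
  sharpness_of_r_general N hN p hp r h
end

section
/- Fix an integer N ≥ 3 and a real p > 2. If r > 0 is such that the inequality 1 ≤ (1 + (N-1)(N(1/N² - (a-1/N)²/(N-1)²)^{p/2} / (a^p + (N-1)^{1-p}(1-a)^p))^r)^{p-1} · (a^p + (N-1)^{1-p}(1-a)^p) holds for a = 0, then r ≤ (ln(N-1) - ln(N-2)) / ((p/2 - 1) ln N + ln(N-1) - (p/2) ln(N-2)). -/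
/-!
At `a = 0` the hypothesis reads `1 ≤ (1 + (N - 1) A ^ r) ^ (p - 1) (N - 1) ^ (1 - p)` with
`A = N ^ (1 - p/2) (N - 2) ^ (p/2) / (N - 1)`, i.e. `(N - 2) / (N - 1) ≤ A ^ r`.
Since `A < 1` for `p ≥ 2`, taking logarithms and dividing by `log A < 0` bounds `r`.
-/

open Real

lemma le_of_one_le_rpow_mul_rpow_one_sub {c t p : ℝ} (hc : 0 < c) (ht : 0 ≤ t) (hp : 1 < p)
    (h : 1 ≤ t ^ (p - 1) * c ^ (1 - p)) : c ≤ t := by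
  rw [show 1 - p = -(p - 1) by ring, rpow_neg hc.le, ← div_eq_mul_inv, ← div_rpow ht hc.le] at h
  have hratio : 1 ≤ t / c :=
    (rpow_le_rpow_iff zero_le_one (div_nonneg ht hc.le) (sub_pos.2 hp)).mp (by rwa [one_rpow])
  exact (one_le_div hc).mp hratio

lemma le_div_log_of_le_rpow {x A r : ℝ} (hx : 0 < x) (hA : 0 < A) (hlogA : log A < 0)
    (h : x ≤ A ^ r) : r ≤ log x / log A := by
  rw [le_div_iff_of_neg hlogA, ← log_rpow hA]
  exact log_le_log hx h

lemma inv_sq_sub_sq_div_sub_one_sq {n : ℝ} (hn0 : n ≠ 0) (hn1 : n - 1 ≠ 0) :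
    1 / n ^ 2 - (1 / n) ^ 2 / (n - 1) ^ 2 = (n - 2) / (n * (n - 1) ^ 2) := by
  field_simp
  ring

section

variable {n : ℝ} (hn : 2 < n)
include hn

lemma log_mul_rpow_div_rpow (p : ℝ) :
    log (n * ((n - 2) / (n * (n - 1) ^ 2)) ^ (p / 2) / (n - 1) ^ (1 - p)) =
      -((p / 2 - 1) * log n + log (n - 1) - p / 2 * log (n - 2)) := by
  have hn1 : 0 < n - 1 := by linarith
  have hn2 : 0 < n - 2 := by linarith
  rw [log_div (by positivity) (by positivity), log_mul (by positivity) (by positivity),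
    log_rpow (by positivity), log_rpow hn1, log_div hn2.ne' (by positivity),
    log_mul (by positivity) (by positivity), log_pow]
  push_cast
  ring

lemma log_exponent_combination_pos {p : ℝ} (hp : 2 ≤ p) :
    0 < (p / 2 - 1) * log n + log (n - 1) - p / 2 * log (n - 2) := by
  have h21 : log (n - 2) < log (n - 1) := log_lt_log (by linarith) (by linarith)
  have h20 : log (n - 2) ≤ log n := log_le_log (by linarith) (by linarith)
  nlinarith

end

theorem necessary_condition_at_a_zero_general (N : ℕ) (hN : 3 ≤ N) (p : ℝ) (hp : 2 < p)
    (r : ℝ)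
    (h : 1 ≤ (1 + ((N : ℝ) - 1) *
          ((N : ℝ) * (1 / (N : ℝ) ^ 2 - ((0 : ℝ) - 1 / N) ^ 2 / ((N : ℝ) - 1) ^ 2) ^ (p / 2)
            / ((0 : ℝ) ^ p + ((N : ℝ) - 1) ^ (1 - p) * (1 - (0 : ℝ)) ^ p)) ^ r) ^ (p - 1)
        * ((0 : ℝ) ^ p + ((N : ℝ) - 1) ^ (1 - p) * (1 - (0 : ℝ)) ^ p)) :
    r ≤ (Real.log ((N : ℝ) - 1) - Real.log ((N : ℝ) - 2)) /
      ((p / 2 - 1) * Real.log N + Real.log ((N : ℝ) - 1) - (p / 2) * Real.log ((N : ℝ) - 2)) := by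
  have hN2 : (2 : ℝ) < N := by exact_mod_cast hN
  have hN1 : (0 : ℝ) < N - 1 := by linarith
  have hN2' : (0 : ℝ) < N - 2 := by linarith
  rw [zero_rpow (by positivity), zero_add, sub_zero, one_rpow, mul_one, zero_sub, neg_sq,
    inv_sq_sub_sq_div_sub_one_sq (by positivity) hN1.ne'] at h
  have hA : 0 < (N : ℝ) * ((N - 2) / (N * (N - 1) ^ 2)) ^ (p / 2) / (N - 1) ^ (1 - p) := by
    positivity
  set A := (N : ℝ) * ((N - 2) / (N * (N - 1) ^ 2)) ^ (p / 2) / (N - 1) ^ (1 - p)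
  have hlin : (N : ℝ) - 1 ≤ 1 + (N - 1) * A ^ r :=
    le_of_one_le_rpow_mul_rpow_one_sub hN1 (by positivity) (by linarith) h
  have hAr : ((N : ℝ) - 2) / (N - 1) ≤ A ^ r := by
    rw [div_le_iff₀ hN1]
    linarith
  have hlogA := log_mul_rpow_div_rpow hN2 p
  have hr := le_div_log_of_le_rpow (by positivity) hA
    (by linarith [hlogA, log_exponent_combination_pos hN2 hp.le]) hAr
  rwa [hlogA, log_div hN2'.ne' hN1.ne', div_neg, ← neg_div, neg_sub] at hr

theorem necessary_condition_at_a_zero (N : ℕ) (hN : 3 ≤ N) (p : ℝ) (hp : 2 < p)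
    (r : ℝ) (hr : 0 < r)
    (h : 1 ≤ (1 + ((N : ℝ) - 1) *
          ((N : ℝ) * (1 / (N : ℝ) ^ 2 - ((0 : ℝ) - 1 / N) ^ 2 / ((N : ℝ) - 1) ^ 2) ^ (p / 2)
            / ((0 : ℝ) ^ p + ((N : ℝ) - 1) ^ (1 - p) * (1 - (0 : ℝ)) ^ p)) ^ r) ^ (p - 1)
        * ((0 : ℝ) ^ p + ((N : ℝ) - 1) ^ (1 - p) * (1 - (0 : ℝ)) ^ p)) :
    r ≤ (Real.log ((N : ℝ) - 1) - Real.log ((N : ℝ) - 2)) /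
      ((p / 2 - 1) * Real.log N + Real.log ((N : ℝ) - 1) - (p / 2) * Real.log ((N : ℝ) - 2)) :=
  necessary_condition_at_a_zero_general N hN p hp r h
end
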